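/- arXiv:2209.02667 — 8 statements merged into one kernel-verified Lean document; each statement's English description precedes it below -/
import Mathlib

section
/- Every cotransverse map ψ : [m] → [n] is non-expansive and quasi-isometric for \vec{d}_1: for all x, y ∈ {0,1}^m, \vec{d}_1(ψ(x),ψ(y)) ≤ \vec{d}_1(x,y), with equality whenever \vec{d}_1(x,y) < ∞ (i.e. whenever x ≤ y componentwise). -/
open scoped ENNReal

/- The directed metric `d⃗₁` on the vertices `{0,1}^n`. -/
open Classical in
noncomputable def vd {n : ℕ} (x y : Fin n → Bool) : ℝ≥0∞ :=
  if x ≤ y then ∑ i, (if x i = y i then 0 else 1) else ⊤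

def Cotransverse {m n : ℕ} (f : (Fin m → Bool) → (Fin n → Bool)) : Prop :=
  StrictMono f ∧ ∀ x y, vd x y = 1 → vd (f x) (f y) = 1

open Classical in
lemma vd_add {n : ℕ} {x z y : Fin n → Bool} (h1 : x ≤ z) (h2 : z ≤ y) :
    vd x y = vd x z + vd z y := by
  unfold vd
  rw [if_pos (h1.trans h2), if_pos h1, if_pos h2, ← Finset.sum_add_distrib]
  refine Finset.sum_congr rfl fun i _ => ?_
  have h1' := h1 i; have h2' := h2 i
  revert h1' h2'
  cases hx : x i <;> cases hz : z i <;> cases hy : y i <;> simp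

open Classical in
lemma vd_card {n : ℕ} {x y : Fin n → Bool} (h : x ≤ y) :
    vd x y = (Finset.univ.filter fun i => x i ≠ y i).card := by
  unfold vd
  rw [if_pos h, Finset.card_filter]
  push_cast
  refine Finset.sum_congr rfl fun i _ => ?_
  by_cases hxy : x i = y i <;> simp [hxy]

lemma vd_self {n : ℕ} (x : Fin n → Bool) : vd x x = 0 := by
  rw [vd_card le_rfl]; simp

/-- Every cotransverse map `ψ : [m] → [n]` is non-expansive for `d⃗₁` and
quasi-isometric: it preserves all finite distances. -/
theorem stmt3 (m n : ℕ) (ψ : (Fin m → Bool) → (Fin n → Bool))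
    (hψ : Cotransverse ψ) :
    ∀ x y : Fin m → Bool,
      vd (ψ x) (ψ y) ≤ vd x y ∧ (vd x y ≠ ⊤ → vd (ψ x) (ψ y) = vd x y) := by
  have hmono : Monotone ψ := fun a b hab => hab.lt_or_eq.elim
    (fun h => (hψ.1 h).le) (fun h => h ▸ le_rfl)
  classical
  have key : ∀ k : ℕ, ∀ x y : Fin m → Bool, x ≤ y →
      (Finset.univ.filter fun i => x i ≠ y i).card = k →
      vd (ψ x) (ψ y) = vd x y := by
    intro k
    induction k with
    | zero =>
      intro x y hxy hc
      have : x = y := by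
        funext i
        by_contra hne
        have : i ∈ (Finset.univ.filter fun i => x i ≠ y i) := by simp [hne]
        rw [Finset.card_eq_zero] at hc
        simp [hc] at this
      subst this; rw [vd_self, vd_self]
    | succ k ih =>
      intro x y hxy hc
      obtain ⟨i, hi⟩ : ∃ i, i ∈ (Finset.univ.filter fun i => x i ≠ y i) := by
        have : (Finset.univ.filter fun i => x i ≠ y i).Nonempty := by rw [← Finset.card_pos, hc]; omega
        exact this
      simp only [Finset.mem_filter, Finset.mem_univ, true_and] at hi
      have hxi : x i = false := by
        have := hxy i
        cases hx : x i
        · rfl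
        · cases hy : y i
          · rw [hx, hy] at this; exact absurd this (by simp)
          · exact absurd (hx.trans hy.symm) hi
      have hyi : y i = true := by
        cases hy : y i
        · exact absurd (hxi.trans hy.symm) hi
        · rfl
      set z : Fin m → Bool := Function.update x i true with hz
      have h1 : x ≤ z := by
        intro j
        rcases eq_or_ne j i with rfl | hj
        · simp [hz, hxi]
        · simp [hz, Function.update_of_ne hj]
      have h2 : z ≤ y := by
        intro j
        rcases eq_or_ne j i with rfl | hj
        · simp [hz, hyi]
        · simp only [hz, Function.update_of_ne hj]; exact hxy j
      have hxz1 : vd x z = 1 := by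
        rw [vd_card h1]
        have : (Finset.univ.filter fun j => x j ≠ z j) = {i} := by
          ext j
          simp only [Finset.mem_filter, Finset.mem_univ, true_and, Finset.mem_singleton]
          constructor
          · intro hne
            by_contra hj
            exact hne (by simp [hz, Function.update_of_ne hj])
          · rintro rfl
            simp [hz, hxi]
        rw [this]; simp
      have hzy : (Finset.univ.filter fun j => z j ≠ y j).card = k := by
        have : (Finset.univ.filter fun j => z j ≠ y j)
            = (Finset.univ.filter fun j => x j ≠ y j).erase i := by
          ext j
          simp only [Finset.mem_filter, Finset.mem_univ, true_and, Finset.mem_erase]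
          rcases eq_or_ne j i with rfl | hj
          · simp [hz, hyi]
          · simp [hz, Function.update_of_ne hj, hj]
        rw [this, Finset.card_erase_of_mem (by simp [hi]), hc]; omega
      have := ih z y h2 hzy
      rw [vd_add h1 h2, vd_add (hmono h1) (hmono h2), this, hxz1, hψ.2 x z hxz1]
  intro x y
  by_cases hxy : x ≤ y
  · have heq := key _ x y hxy rfl
    exact ⟨heq.le, fun _ => heq⟩
  · have : vd x y = ⊤ := by unfold vd; rw [if_neg hxy]
    rw [this]
    exact ⟨le_top, fun h => absurd rfl h⟩
end

section
/- For every cotransverse map f : [n] → [n], the map T(f) : [0,1]^n → [0,1]^n is continuous, strictly increasing (x ≤ y implies T(f)(x) ≤ T(f)(y), and if moreover x ≤ y and T(f)(x) = T(f)(y) then x = y), and satisfies h(T(f)(x)) = h(x), i.e. Σᵢ T(f)(x)ᵢ = Σᵢ xᵢ, for all x ∈ [0,1]^n. -/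
open scoped ENNReal

instance : Fact ((0:ℝ) ≤ 1) := ⟨zero_le_one⟩

/-- The topologized map `T(f) : [0,1]^m → [0,1]^n` associated with a map
`f : {0,1}^m → {0,1}^n`, defined coordinatewise by the max-min (sup-inf)
formula, the sup and inf being taken in the complete lattice `[0,1]`
(so `sup ∅ = 0` and `inf ∅ = 1`). -/
noncomputable def Tmap {m n : ℕ} (f : (Fin m → Bool) → (Fin n → Bool))
    (x : Fin m → unitInterval) : Fin n → unitInterval :=
  fun i => ⨆ (ε : Fin m → Bool) (_ : f ε i = true), ⨅ (k : Fin m) (_ : ε k = true), x k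

/-!
For a cotransverse `f`, the weight `|v|` (number of `true` coordinates) satisfies
`|f v| = |f ⊥| + |v|`: walk up from `⊥` one coordinate at a time, each step being an edge
(`vd = 1`) that `f` maps to an edge. For `f : [n] → [n]` this forces `|f v| = |v|`.
By the max–min formula, for `0 < t` the superlevel set `{i | t ≤ T(f)(x)ᵢ}` is `f` applied to
`{k | t ≤ xₖ}`, so `T(f)(x)` and `x` have equally many coordinates above every level
`t ∈ (0,1]`, and integrating over `t` (layer-cake) gives `h(T(f)(x)) = h(x)`.
Strict monotonicity then follows from monotonicity and the preservation of `h`.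
-/

open Finset MeasureTheory

section Weight

variable {n : ℕ}

def weight (v : Fin n → Bool) : ℕ := #{i | v i = true}

lemma weight_le (v : Fin n → Bool) : weight v ≤ n :=
  (card_filter_le _ _).trans_eq (card_fin n)

lemma weight_top : weight (⊤ : Fin n → Bool) = n := by
  simp [weight]

lemma weight_bot : weight (⊥ : Fin n → Bool) = 0 := by
  simp [weight]

lemma vd_eq_card_of_le {a b : Fin n → Bool} (h : a ≤ b) : vd a b = #{i | a i ≠ b i} := by
  rw [vd, if_pos h, natCast_card_filter]
  simp_rw [ite_not]

lemma weight_eq_add_card_of_le {a b : Fin n → Bool} (h : a ≤ b) :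
    weight b = weight a + #{i | a i ≠ b i} := by
  rw [weight, weight, ← card_union_of_disjoint]
  · congr 1
    ext i
    simp only [mem_union, mem_filter, mem_univ, true_and]
    have := h i
    revert this
    cases a i <;> cases b i <;> simp
  · exact disjoint_filter.2 fun i _ ha hne => hne (le_antisymm (h i) (ha ▸ le_top))

lemma weight_eq_add_one_of_vd_eq_one {a b : Fin n → Bool} (h : vd a b = 1) :
    weight b = weight a + 1 := by
  have hab : a ≤ b := by
    by_contra hab
    simp [vd, hab] at h
  rw [vd_eq_card_of_le hab, Nat.cast_eq_one] at h
  rw [weight_eq_add_card_of_le hab, h]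

lemma vd_update_false {v : Fin n → Bool} {i : Fin n} (hi : v i = true) :
    vd (Function.update v i false) v = 1 := by
  rw [vd_eq_card_of_le (update_le_self_iff.2 (Bool.false_le _))]
  convert Nat.cast_one
  rw [card_eq_one]
  refine ⟨i, ?_⟩
  ext j
  by_cases hj : j = i <;> simp [hj, hi]

end Weight

namespace Cotransverse

variable {m n : ℕ}

lemma weight_apply_eq {f : (Fin m → Bool) → (Fin n → Bool)} (hf : Cotransverse f)
    (v : Fin m → Bool) : weight (f v) = weight (f ⊥) + weight v := by
  induction v using WellFoundedLT.induction with
  | _ v ih =>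
  by_cases hv : ∃ i, v i = true
  · obtain ⟨i, hi⟩ := hv
    have hwv := vd_update_false hi
    have hlt : Function.update v i false < v := update_lt_self_iff.2 (by simp [hi])
    rw [weight_eq_add_one_of_vd_eq_one (hf.2 _ _ hwv), ih _ hlt,
      weight_eq_add_one_of_vd_eq_one hwv, add_assoc]
  · obtain rfl : v = ⊥ := funext fun i => by simpa using not_exists.1 hv i
    rw [weight_bot, add_zero]

lemma weight_apply {f : (Fin n → Bool) → (Fin n → Bool)} (hf : Cotransverse f)
    (v : Fin n → Bool) : weight (f v) = weight v := by
  have htop := hf.weight_apply_eq ⊤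
  have := weight_le (f ⊤)
  rw [weight_top] at htop
  rw [hf.weight_apply_eq v]
  omega

end Cotransverse

section Tmap

variable {m n : ℕ} (f : (Fin m → Bool) → (Fin n → Bool))

lemma Tmap_apply (x : Fin m → unitInterval) (i : Fin n) :
    Tmap f x i = Finset.sup {ε | f ε i = true} fun ε => Finset.inf {k | ε k = true} x := by
  simp only [Tmap, Finset.sup_eq_iSup, Finset.inf_eq_iInf, mem_filter, mem_univ, true_and]

lemma continuous_Tmap : Continuous (Tmap f) :=
  continuous_pi fun _ => by
    simp only [Tmap_apply]
    exact Continuous.finset_sup_apply fun ε _ =>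
      Continuous.finset_inf_apply fun k _ => continuous_apply (A := fun _ => unitInterval) k

lemma monotone_Tmap : Monotone (Tmap f) := fun _ _ hxy _ =>
  iSup₂_mono fun _ _ => iInf₂_mono fun k _ => hxy k

variable {f}

lemma le_Tmap_apply_iff (hf : Monotone f) {t : unitInterval} (ht : 0 < t)
    (x : Fin m → unitInterval) (i : Fin n) :
    t ≤ Tmap f x i ↔ f (fun k => decide (t ≤ x k)) i = true := by
  rw [Tmap_apply, Finset.le_sup_iff ht]
  constructor
  · rintro ⟨ε, hε, hle⟩
    simp only [mem_filter, mem_univ, true_and] at hε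
    rw [Finset.le_inf_iff] at hle
    have hεχ : ε ≤ fun k => decide (t ≤ x k) := fun k =>
      Bool.le_iff_imp.2 fun hk => decide_eq_true (hle k (by simpa using hk))
    exact Bool.le_iff_imp.1 (hf hεχ i) hε
  · intro h
    exact ⟨_, by simpa using h, Finset.le_inf fun k hk => by simpa using hk⟩

end Tmap

lemma sum_eq_integral_card_le {ι : Type*} [Fintype ι] (a : ι → unitInterval) :
    ∑ i, (a i : ℝ) = ∫ t in Set.Ioc (0 : ℝ) 1, (#{i | t ≤ (a i : ℝ)} : ℝ) := by
  have hind (a : ℝ) :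
      (fun t : ℝ => if t ≤ a then (1 : ℝ) else 0) = (Set.Iic a).indicator 1 := by
    ext t
    simp [Set.indicator_apply]
  simp_rw [natCast_card_filter]
  rw [integral_finsetSum _ fun i _ => by
    rw [hind]; exact (integrable_const 1).indicator measurableSet_Iic]
  refine sum_congr rfl fun i _ => ?_
  rw [hind, integral_indicator_one measurableSet_Iic, measureReal_restrict_apply measurableSet_Iic,
    Set.Iic_inter_Ioc_of_le (a i).2.2, Real.volume_real_Ioc_of_le (a i).2.1, sub_zero]

lemma Cotransverse.card_le_Tmap_eq {n : ℕ} {f : (Fin n → Bool) → (Fin n → Bool)}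
    (hf : Cotransverse f) {t : unitInterval} (ht : 0 < t) (x : Fin n → unitInterval) :
    #{i | t ≤ Tmap f x i} = #{k | t ≤ x k} := by
  simp only [le_Tmap_apply_iff hf.1.monotone ht]
  exact (hf.weight_apply _).trans (by simp [weight])

lemma Cotransverse.sum_Tmap {n : ℕ} {f : (Fin n → Bool) → (Fin n → Bool)}
    (hf : Cotransverse f) (x : Fin n → unitInterval) :
    ∑ i, (Tmap f x i : ℝ) = ∑ i, (x i : ℝ) := by
  rw [sum_eq_integral_card_le, sum_eq_integral_card_le]
  refine setIntegral_congr_fun measurableSet_Ioc fun t ht => ?_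
  exact congrArg Nat.cast (hf.card_le_Tmap_eq (t := ⟨t, ht.1.le, ht.2⟩) ht.1 x)

lemma eq_of_le_of_sum_eq {ι : Type*} [Fintype ι] {x y : ι → unitInterval} (hxy : x ≤ y)
    (h : ∑ i, (x i : ℝ) = ∑ i, (y i : ℝ)) : x = y :=
  funext fun i => Subtype.ext <|
    (sum_eq_sum_iff_of_le (f := fun i => (x i : ℝ)) fun i _ => hxy i).1 h i (mem_univ i)

/-- For a cotransverse map `f : [n] → [n]`, the map `T(f) : [0,1]^n → [0,1]^n`
is continuous, strictly increasing, and preserves the coordinate sum `h`. -/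
theorem stmt5 (n : ℕ) (f : (Fin n → Bool) → (Fin n → Bool))
    (hf : Cotransverse f) :
    Continuous (Tmap f) ∧
    Monotone (Tmap f) ∧
    (∀ x y : Fin n → unitInterval, x ≤ y → Tmap f x = Tmap f y → x = y) ∧
    (∀ x : Fin n → unitInterval, ∑ i, (Tmap f x i : ℝ) = ∑ i, (x i : ℝ)) := by
  refine ⟨continuous_Tmap f, monotone_Tmap f, fun x y hxy hT => ?_, hf.sum_Tmap⟩
  exact eq_of_le_of_sum_eq hxy (by rw [← hf.sum_Tmap x, ← hf.sum_Tmap y, hT])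
end

section
/- For any two cotransverse maps f : [n] → [n] and g : [n] → [n], one has T(f∘g) = T(f) ∘ T(g) as maps [0,1]^n → [0,1]^n. -/
open scoped ENNReal

/-- In a finite index type, a `biSup` over a nonempty predicate has a maximizer. -/
lemma exists_max_pred {ι : Type*} [Fintype ι] {α : Type*} [LinearOrder α]
    (P : ι → Prop) [DecidablePred P] (v : ι → α) (h : ∃ i, P i) :
    ∃ i, P i ∧ ∀ j, P j → v j ≤ v i := by
  obtain ⟨i0, hi0⟩ := h
  obtain ⟨b, hb, hmax⟩ := Finset.exists_max_image (Finset.univ.filter P) v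
    ⟨i0, by simp [hi0]⟩
  exact ⟨b, (Finset.mem_filter.mp hb).2, fun j hj => hmax j (by simp [hj])⟩

/-- For cotransverse maps `f, g : [n] → [n]`, `T(f ∘ g) = T(f) ∘ T(g)`. -/
theorem stmt7 (n : ℕ) (f g : (Fin n → Bool) → (Fin n → Bool))
    (hf : Cotransverse f) (hg : Cotransverse g) :
    Tmap (f ∘ g) = Tmap f ∘ Tmap g := by
  classical
  funext x i
  simp only [Function.comp_apply]
  apply le_antisymm
  · -- easy direction
    apply iSup₂_le
    intro ε hε
    have h1 : (⨅ k, ⨅ (_ : ε k = true), x k)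
        ≤ ⨅ j, ⨅ (_ : g ε j = true), Tmap g x j := by
      refine le_iInf₂ fun j hj => ?_
      exact le_iSup₂ (f := fun ε' (_ : g ε' j = true) =>
        ⨅ k, ⨅ (_ : ε' k = true), x k) ε hj
    exact h1.trans (le_iSup₂ (f := fun δ (_ : f δ i = true) =>
      ⨅ j, ⨅ (_ : δ j = true), Tmap g x j) (g ε) hε)
  · -- hard direction
    apply iSup₂_le
    intro δ hδ
    by_cases hall : ∀ j, δ j = true → ∃ ε, g ε j = true
    · choose εf hεf hmax using fun j hj =>
        exists_max_pred (fun ε => g ε j = true)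
          (fun ε => ⨅ k, ⨅ (_ : ε k = true), x k) (hall j hj)
      set η : Fin n → Bool :=
        fun k => decide (∃ j, ∃ hj : δ j = true, εf j hj k = true) with hη
      have hεη : ∀ j (hj : δ j = true), εf j hj ≤ η := by
        intro j hj k
        cases hk : εf j hj k with
        | false => simp
        | true =>
          have : η k = true := by
            rw [hη]; exact decide_eq_true ⟨j, hj, hk⟩
          simp [this]
      have hδgη : δ ≤ g η := by
        intro j
        cases hj : δ j with
        | false => simp
        | true =>
          have h1 : g (εf j hj) ≤ g η := hg.1.monotone (hεη j hj)
          have h2 : g η j = true := by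
            have := h1 j
            rw [hεf j hj] at this
            exact le_antisymm (Bool.le_true _) this
          simp [h2]
      have hfgη : f (g η) i = true := by
        have h1 : f δ ≤ f (g η) := hf.1.monotone hδgη
        have := h1 i
        rw [hδ] at this
        exact le_antisymm (Bool.le_true _) this
      have key : (⨅ j, ⨅ (_ : δ j = true), Tmap g x j)
          ≤ ⨅ k, ⨅ (_ : η k = true), x k := by
        refine le_iInf₂ fun k hk => ?_
        obtain ⟨j, hj, hk'⟩ := of_decide_eq_true hk
        have h1 : (⨅ j', ⨅ (_ : δ j' = true), Tmap g x j') ≤ Tmap g x j :=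
          iInf₂_le j hj
        have h2 : Tmap g x j ≤ ⨅ k', ⨅ (_ : εf j hj k' = true), x k' :=
          iSup₂_le fun ε' h' => hmax j hj ε' h'
        exact (h1.trans h2).trans (iInf₂_le k hk')
      refine key.trans ?_
      exact le_iSup₂ (f := fun ε (_ : (f ∘ g) ε i = true) =>
        ⨅ k, ⨅ (_ : ε k = true), x k) η hfgη
    · push_neg at hall
      obtain ⟨j, hj, hno⟩ := hall
      have h1 : (⨅ j', ⨅ (_ : δ j' = true), Tmap g x j') ≤ Tmap g x j :=
        iInf₂_le j hj
      have h2 : Tmap g x j ≤ Tmap (f ∘ g) x i :=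
        iSup₂_le fun ε hε => absurd hε (hno ε)
      exact h1.trans h2
end

section
/- For any cotransverse maps g : [m] → [n] and f : [n] → [p], one has T(f∘g) = T(f) ∘ T(g) as maps [0,1]^m → [0,1]^p; i.e. the assignment [n] ↦ [0,1]^n, f ↦ T(f) is functorial on cotransverse maps. -/
open scoped ENNReal

/-- Functoriality: for cotransverse maps `g : [m] → [n]` and `f : [n] → [p]`,
`T(f ∘ g) = T(f) ∘ T(g)` as maps `[0,1]^m → [0,1]^p`. -/
theorem stmt8 (m n p : ℕ) (g : (Fin m → Bool) → (Fin n → Bool))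
    (f : (Fin n → Bool) → (Fin p → Bool))
    (hg : Cotransverse g) (hf : Cotransverse f) :
    Tmap (f ∘ g) = Tmap f ∘ Tmap g := by
  classical
  have gmono := hg.1.monotone
  have fmono := hf.1.monotone
  funext x i
  show (⨆ (ε : Fin m → Bool) (_ : f (g ε) i = true), ⨅ (k) (_ : ε k = true), x k)
      = ⨆ (δ : Fin n → Bool) (_ : f δ i = true), ⨅ (j) (_ : δ j = true), Tmap g x j
  apply le_antisymm
  · refine iSup₂_le fun ε hε => ?_
    refine le_trans ?_ (le_iSup₂ (g ε) hε)
    refine le_iInf₂ fun j hj => ?_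
    exact le_iSup₂ (f := fun (ε' : Fin m → Bool) (_ : g ε' j = true) =>
      ⨅ (k) (_ : ε' k = true), x k) ε hj
  · refine iSup₂_le fun δ hδ => ?_
    by_cases hne : ∀ j, δ j = true → ∃ ε, g ε j = true
    · -- choose maximizers
      have hex : ∀ j : Fin n, ∃ e : Fin m → Bool, δ j = true →
          g e j = true ∧ ∀ ε', g ε' j = true →
            (⨅ (k) (_ : ε' k = true), x k) ≤ ⨅ (k) (_ : e k = true), x k := by
        intro j
        by_cases hj : δ j = true
        · obtain ⟨ε0, hε0⟩ := hne j hj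
          have hs : (Finset.univ.filter fun ε => g ε j = true).Nonempty :=
            ⟨ε0, by simp [hε0]⟩
          obtain ⟨e, he, hmax⟩ := Finset.exists_max_image _
            (fun ε : Fin m → Bool => ⨅ (k) (_ : ε k = true), x k) hs
          refine ⟨e, fun _ => ⟨(Finset.mem_filter.1 he).2, fun ε' hε' => ?_⟩⟩
          exact hmax ε' (by simp [hε'])
        · exact ⟨fun _ => false, fun h => absurd h hj⟩
      choose E hE using hex
      set ε : Fin m → Bool := fun k => decide (∃ j, δ j = true ∧ E j k = true) with hεdef
      have hεle : ∀ j, δ j = true → E j ≤ ε := by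
        intro j hj k
        cases h : E j k with
        | false => simp
        | true =>
          have hε : ε k = true := by
            simp only [hεdef]; exact decide_eq_true ⟨j, hj, h⟩
          simp [hε]
      have hδle : δ ≤ g ε := by
        intro j
        by_cases hj : δ j = true
        · have := gmono (hεle j hj) j
          rw [(hE j hj).1] at this
          simp [hj, le_antisymm this le_top]
        · simp at hj; simp [hj]
      have hfi : f (g ε) i = true := by
        have := fmono hδle i
        rw [hδ] at this
        exact le_antisymm le_top this
      refine le_trans ?_ (le_iSup₂ (f := fun (ε' : Fin m → Bool) (_ : f (g ε') i = true) =>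
        ⨅ (k) (_ : ε' k = true), x k) ε hfi)
      refine le_iInf₂ fun k hk => ?_
      have hk' : ∃ j, δ j = true ∧ E j k = true := by
        simpa [hεdef] using hk
      obtain ⟨j, hj, hjk⟩ := hk'
      refine le_trans (iInf₂_le j hj) ?_
      have h1 : Tmap g x j ≤ ⨅ (k') (_ : E j k' = true), x k' :=
        iSup₂_le fun ε' hε' => (hE j hj).2 ε' hε'
      exact le_trans h1 (iInf₂_le k hjk)
    · push_neg at hne
      obtain ⟨j, hj, hbad⟩ := hne
      have h1 : Tmap g x j ≤ ⊥ := iSup₂_le fun ε' hε' => absurd hε' (hbad ε')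
      exact le_trans (iInf₂_le j hj) (le_trans h1 bot_le)
end

section
/- Let (X,d) be a Lawvere metric space and define d^∧ : X × X → [0,∞] by d^∧(x,y) = inf over all n ≥ 0 and all finite sequences x = x_0, x_1, …, x_{n+2} = y in X of Σ_{i=0}^{n} ( d(x_{i+1},x_i) + d(x_{i+1},x_{i+2}) ). Then: (a) d^∧ is symmetric: d^∧(x,y) = d^∧(y,x) for all x, y; (b) d^∧(x,y) ≤ d(x,y) for all x, y; (c) d^∧ is universal: for every pseudometric space (Y,ρ) and every map g : X → Y with ρ(g(x),g(y)) ≤ d(x,y) for all x, y ∈ X, one has ρ(g(x),g(y)) ≤ d^∧(x,y) for all x, y ∈ X. -/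
open scoped ENNReal

/-- The symmetrization `d^∧` of a Lawvere metric `d` : the infimum over all
`n ≥ 0` and all finite sequences `x = x₀, x₁, …, x_{n+2} = y` of
`Σ_{i=0}^{n} ( d(x_{i+1}, x_i) + d(x_{i+1}, x_{i+2}) )`. -/
noncomputable def dWedge {X : Type*} (d : X → X → ℝ≥0∞) (x y : X) : ℝ≥0∞ :=
  ⨅ (n : ℕ) (c : ℕ → X) (_ : c 0 = x) (_ : c (n + 2) = y),
    ∑ i ∈ Finset.range (n + 1), (d (c (i + 1)) (c i) + d (c (i + 1)) (c (i + 2)))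

open Finset

noncomputable def zigzagCost {X : Type*} (d : X → X → ℝ≥0∞) (n : ℕ) (c : ℕ → X) : ℝ≥0∞ :=
  ∑ i ∈ range (n + 1), (d (c (i + 1)) (c i) + d (c (i + 1)) (c (i + 2)))

section Zigzag

variable {X : Type*} (d : X → X → ℝ≥0∞)

theorem dWedge_le_zigzagCost {x y : X} (n : ℕ) {c : ℕ → X} (h0 : c 0 = x) (h2 : c (n + 2) = y) :
    dWedge d x y ≤ zigzagCost d n c :=
  iInf_le_of_le n <| iInf_le_of_le c <| iInf_le_of_le h0 <| iInf_le _ h2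

theorem le_dWedge_iff {x y : X} {a : ℝ≥0∞} :
    a ≤ dWedge d x y ↔ ∀ n (c : ℕ → X), c 0 = x → c (n + 2) = y → a ≤ zigzagCost d n c := by
  simp only [dWedge, le_iInf_iff, zigzagCost]

theorem zigzagCost_reverse (n : ℕ) (c : ℕ → X) :
    zigzagCost d n (fun i => c (n + 2 - i)) = zigzagCost d n c := by
  rw [zigzagCost, ← sum_range_reflect]
  refine sum_congr rfl fun i hi => ?_
  have hi : i ≤ n := Nat.lt_succ_iff.mp (mem_range.mp hi)
  rw [show n + 1 - 1 - i = n - i by omega, show n + 2 - (n - i + 1) = i + 1 by omega,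
    show n + 2 - (n - i) = i + 2 by omega, show n + 2 - (n - i + 2) = i by omega, add_comm]

theorem dWedge_comm (x y : X) : dWedge d x y = dWedge d y x := by
  have hle : ∀ x y : X, dWedge d x y ≤ dWedge d y x := fun x y =>
    (le_dWedge_iff d).2 fun n c h0 h2 =>
      (zigzagCost_reverse d n c) ▸ dWedge_le_zigzagCost d n (by simpa using h2) (by simpa using h0)
  exact le_antisymm (hle x y) (hle y x)

/-- The zigzag `x, x, y` has cost `d(x, x) + d(x, y)`. -/
theorem dWedge_le (hd0 : ∀ x, d x x = 0) (x y : X) : dWedge d x y ≤ d x y := by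
  simpa [zigzagCost, hd0] using
    dWedge_le_zigzagCost d 0 (c := fun i => if i ≤ 1 then x else y) (by simp) (by simp)

end Zigzag

theorem le_range_sum_of_triangle {Y : Type*} (ρ : Y → Y → ℝ≥0∞) (h0 : ∀ a, ρ a a = 0)
    (htri : ∀ a b c, ρ a c ≤ ρ a b + ρ b c) (f : ℕ → Y) (m : ℕ) :
    ρ (f 0) (f m) ≤ ∑ k ∈ range m, ρ (f k) (f (k + 1)) := by
  induction m with
  | zero => simp [h0]
  | succ m ih =>
    rw [sum_range_succ]
    exact (htri _ (f m) _).trans (add_le_add_left ih _)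

/-- Walking along a zigzag, each step `c i → c (i+1)` is paid for by the backward term
`d(c (i+1), c i)`, except the last one, which is paid for by the forward term at `i = n`. -/
theorem le_zigzagCost {X Y : Type*} (d : X → X → ℝ≥0∞) (ρ : Y → Y → ℝ≥0∞)
    (hρ0 : ∀ a, ρ a a = 0) (hρsymm : ∀ a b, ρ a b = ρ b a)
    (hρtri : ∀ a b c, ρ a c ≤ ρ a b + ρ b c) (g : X → Y) (hg : ∀ x y, ρ (g x) (g y) ≤ d x y)
    (n : ℕ) (c : ℕ → X) : ρ (g (c 0)) (g (c (n + 2))) ≤ zigzagCost d n c := by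
  calc ρ (g (c 0)) (g (c (n + 2)))
      ≤ ∑ k ∈ range (n + 2), ρ (g (c k)) (g (c (k + 1))) :=
        le_range_sum_of_triangle ρ hρ0 hρtri (g ∘ c) (n + 2)
    _ = ∑ i ∈ range (n + 1), ρ (g (c (i + 1))) (g (c i)) + ρ (g (c (n + 1))) (g (c (n + 2))) := by
        rw [sum_range_succ _ (n + 1)]
        exact congrArg (· + _) (sum_congr rfl fun i _ => hρsymm _ _)
    _ ≤ ∑ i ∈ range (n + 1), d (c (i + 1)) (c i) + ∑ i ∈ range (n + 1), d (c (i + 1)) (c (i + 2)) :=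
        add_le_add (sum_le_sum fun i _ => hg _ _) <| (hg _ _).trans <|
          single_le_sum (f := fun i => d (c (i + 1)) (c (i + 2))) (fun _ _ => zero_le)
            (self_mem_range_succ n)
    _ = zigzagCost d n c := sum_add_distrib.symm

theorem stmt10_general {X : Type*} (d : X → X → ℝ≥0∞)
    (hd0 : ∀ x, d x x = 0) :
    (∀ x y, dWedge d x y = dWedge d y x) ∧
    (∀ x y, dWedge d x y ≤ d x y) ∧
    (∀ (Y : Type*) (ρ : Y → Y → ℝ≥0∞),
      (∀ a, ρ a a = 0) → (∀ a b, ρ a b = ρ b a) → (∀ a b c, ρ a c ≤ ρ a b + ρ b c) →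
      ∀ g : X → Y, (∀ x y, ρ (g x) (g y) ≤ d x y) →
        ∀ x y, ρ (g x) (g y) ≤ dWedge d x y) := by
  refine ⟨dWedge_comm d, dWedge_le d hd0, ?_⟩
  intro Y ρ hρ0 hρsymm hρtri g hg x y
  refine (le_dWedge_iff d).2 fun n c h0 h2 => ?_
  subst h0 h2
  exact le_zigzagCost d ρ hρ0 hρsymm hρtri g hg n c

/-- For a Lawvere metric space `(X, d)`, the symmetrization `d^∧` is symmetric,
bounded above by `d`, and universal among pseudometrics `ρ` on a set `Y`
receiving a non-expansive map from `(X, d)`. -/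
theorem stmt10 {X : Type*} (d : X → X → ℝ≥0∞)
    (hd0 : ∀ x, d x x = 0) (hdtri : ∀ x y z, d x y ≤ d x z + d z y) :
    (∀ x y, dWedge d x y = dWedge d y x) ∧
    (∀ x y, dWedge d x y ≤ d x y) ∧
    (∀ (Y : Type*) (ρ : Y → Y → ℝ≥0∞),
      (∀ a, ρ a a = 0) → (∀ a b, ρ a b = ρ b a) → (∀ a b c, ρ a c ≤ ρ a b + ρ b c) →
      ∀ g : X → Y, (∀ x y, ρ (g x) (g y) ≤ d x y) →
        ∀ x y, ρ (g x) (g y) ≤ dWedge d x y) :=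
  stmt10_general d hd0
end

section
/- Let n ≥ 1 and let γ = (γ_1,…,γ_n) : [0,n] → [0,1]^n be a set map. Then γ is a natural d-path — i.e. γ is continuous, each coordinate γᵢ is nondecreasing, γ(0) and γ(n) belong to {0,1}^n, and Σᵢ γᵢ(t) = t for all t ∈ [0,n] — if and only if γ is a quasi-isometry for the directed metrics \vec{d}_1, i.e. for all s ≤ t in [0,n], γ(s) ≤ γ(t) componentwise and Σᵢ (γᵢ(t) − γᵢ(s)) = t − s. -/
/-! For `s ≤ t` the increments `γᵢ(t) − γᵢ(s)` are nonnegative and sum to `t − s`, so each of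
them is at most `t − s`: every coordinate is monotone and `1`-Lipschitz, hence `γ` is continuous.
Taking `s = 0`, `t = n`, the `n` increments, each at most `1`, sum to `n`, so each equals `1`,
which forces `γ(0) = 0` and `γ(n) = 1`; the identity `Σᵢ γᵢ(t) = t` then follows from `s = 0`. -/

open Finset

theorem unitInterval.eq_zero_and_eq_one_of_sub_eq_one {x y : unitInterval}
    (h : (y : ℝ) - x = 1) : x = 0 ∧ y = 1 := by
  have hx : (0 : ℝ) ≤ x := x.2.1
  have hy : (y : ℝ) ≤ 1 := y.2.2
  exact ⟨Subtype.ext (by push_cast; linarith), Subtype.ext (by push_cast; linarith)⟩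

theorem unitInterval.eq_zero_and_eq_one_of_sum_sub_eq_card {ι : Type*} [Fintype ι]
    {x y : ι → unitInterval} (h : ∑ i, ((y i : ℝ) - x i) = Fintype.card ι) : x = 0 ∧ y = 1 := by
  have hle : ∀ i ∈ univ, (y i : ℝ) - x i ≤ 1 := fun i _ => by
    have hx : (0 : ℝ) ≤ x i := (x i).2.1
    have hy : (y i : ℝ) ≤ 1 := (y i).2.2
    linarith
  have hsum : ∑ i, ((y i : ℝ) - x i) = ∑ _i : ι, (1 : ℝ) := by simpa using h
  have hone i := eq_zero_and_eq_one_of_sub_eq_one ((sum_eq_sum_iff_of_le hle).1 hsum i (mem_univ i))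
  exact ⟨funext fun i => (hone i).1, funext fun i => (hone i).2⟩

theorem sub_le_sum_sub_of_le {ι : Type*} [Fintype ι] {x y : ι → ℝ} (hxy : x ≤ y) (i : ι) :
    y i - x i ≤ ∑ j, (y j - x j) :=
  single_le_sum (f := fun j => y j - x j) (fun j _ => sub_nonneg.2 (hxy j)) (mem_univ i)

theorem lipschitzWith_one_of_monotone_of_sub_le {s : Set ℝ} {f : s → ℝ} (hf : Monotone f)
    (h : ∀ a b : s, a ≤ b → f b - f a ≤ (b : ℝ) - a) : LipschitzWith 1 f := by
  refine LipschitzWith.of_le_add fun a b => ?_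
  rcases le_total a b with hab | hba
  · linarith [hf hab, dist_nonneg (x := a) (y := b)]
  · have hdist : dist a b = (a : ℝ) - b := by
      rw [Subtype.dist_eq, Real.dist_eq, abs_of_nonneg (sub_nonneg.2 (Subtype.coe_le_coe.2 hba))]
    linarith [h b a hba]

theorem stmt12_general (n : ℕ)
    (γ : Set.Icc (0 : ℝ) (n : ℝ) → (Fin n → unitInterval)) :
    (Continuous γ ∧
     (∀ i : Fin n, Monotone (fun t => γ t i)) ∧
     (∀ i : Fin n,
        γ ⟨0, le_rfl, Nat.cast_nonneg n⟩ i = 0 ∨ γ ⟨0, le_rfl, Nat.cast_nonneg n⟩ i = 1) ∧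
     (∀ i : Fin n,
        γ ⟨(n : ℝ), Nat.cast_nonneg n, le_rfl⟩ i = 0 ∨
        γ ⟨(n : ℝ), Nat.cast_nonneg n, le_rfl⟩ i = 1) ∧
     (∀ t : Set.Icc (0 : ℝ) (n : ℝ), ∑ i, (γ t i : ℝ) = (t : ℝ)))
    ↔
    (∀ s t : Set.Icc (0 : ℝ) (n : ℝ), s ≤ t →
       γ s ≤ γ t ∧ ∑ i, ((γ t i : ℝ) - (γ s i : ℝ)) = (t : ℝ) - (s : ℝ)) := by
  constructor
  · rintro ⟨-, hmono, -, -, hsum⟩ s t hst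
    exact ⟨fun i => hmono i hst, by rw [sum_sub_distrib, hsum, hsum]⟩
  intro H
  set z : Set.Icc (0 : ℝ) n := ⟨0, le_rfl, Nat.cast_nonneg n⟩
  set e : Set.Icc (0 : ℝ) n := ⟨n, Nat.cast_nonneg n, le_rfl⟩
  obtain ⟨hz, he⟩ := unitInterval.eq_zero_and_eq_one_of_sum_sub_eq_card (x := γ z) (y := γ e)
    (by simpa [z, e] using (H z e (Nat.cast_nonneg (α := ℝ) n)).2)
  have hsum (t : Set.Icc (0 : ℝ) n) : ∑ i, (γ t i : ℝ) = t := by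
    have h := (H z t t.2.1).2
    rw [sum_sub_distrib, hz] at h
    simpa [z] using h
  have hmono (i : Fin n) : Monotone fun t => γ t i := fun s t hst => (H s t hst).1 i
  have hlip (i : Fin n) : LipschitzWith 1 fun t => (γ t i : ℝ) :=
    lipschitzWith_one_of_monotone_of_sub_le (fun s t hst => hmono i hst) fun s t hst =>
      (sub_le_sum_sub_of_le (fun j => (H s t hst).1 j) i).trans_eq (H s t hst).2
  exact ⟨continuous_pi fun i => (hlip i).continuous.subtype_mk _, hmono,
    fun i => .inl (congrFun hz i), fun i => .inr (congrFun he i), hsum⟩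

/-- A map `γ : [0,n] → [0,1]^n` is a natural d-path if and only if it is a
quasi-isometry for the directed metrics `d⃗₁` (non-expansive and preserving all
finite distances): for all `s ≤ t`, `γ(s) ≤ γ(t)` componentwise and
`Σᵢ (γᵢ(t) − γᵢ(s)) = t − s`. -/
theorem stmt12 (n : ℕ) (hn : 1 ≤ n)
    (γ : Set.Icc (0 : ℝ) (n : ℝ) → (Fin n → unitInterval)) :
    (Continuous γ ∧
     (∀ i : Fin n, Monotone (fun t => γ t i)) ∧
     (∀ i : Fin n,
        γ ⟨0, le_rfl, Nat.cast_nonneg n⟩ i = 0 ∨ γ ⟨0, le_rfl, Nat.cast_nonneg n⟩ i = 1) ∧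
     (∀ i : Fin n,
        γ ⟨(n : ℝ), Nat.cast_nonneg n, le_rfl⟩ i = 0 ∨
        γ ⟨(n : ℝ), Nat.cast_nonneg n, le_rfl⟩ i = 1) ∧
     (∀ t : Set.Icc (0 : ℝ) (n : ℝ), ∑ i, (γ t i : ℝ) = (t : ℝ)))
    ↔
    (∀ s t : Set.Icc (0 : ℝ) (n : ℝ), s ≤ t →
       γ s ≤ γ t ∧ ∑ i, ((γ t i : ℝ) - (γ s i : ℝ)) = (t : ℝ) - (s : ℝ)) :=
  stmt12_general n γ
end

section
/- Let 0 ≤ m ≤ n and let f : [m] → [n] be a cotransverse map. Then there exists a factorization f = φ ∘ ψ with φ : [m] → [n] cocubical and ψ : [m] → [m] cotransverse which is final among factorizations with level second component: for every factorization f = h ∘ g with h : [m] → [n] cotransverse and g : [m] → [m] cotransverse, there exists a unique cotransverse map k : [m] → [m] such that ψ = k ∘ g and h = φ ∘ k. -/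
open scoped ENNReal

/-- A map `φ : [m] → [n]` is cocubical (a composite of coface maps): there is a
strictly increasing `ι : Fin m → Fin n` and constants `b j` outside the image
of `ι` such that `φ x (ι i) = x i` and `φ x j = b j` for `j` outside the image. -/
def Cocubical {m n : ℕ} (φ : (Fin m → Bool) → (Fin n → Bool)) : Prop :=
  ∃ (ι : Fin m → Fin n) (b : Fin n → Bool), StrictMono ι ∧
    (∀ x i, φ x (ι i) = x i) ∧
    (∀ x j, j ∉ Set.range ι → φ x j = b j)

namespace Aux13

def dcard {n : ℕ} (x y : Fin n → Bool) : ℕ :=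
  (Finset.univ.filter fun i => x i ≠ y i).card

lemma eq_of_dcard_eq_zero {n : ℕ} {x y : Fin n → Bool} (h : dcard x y = 0) : x = y := by
  funext i
  by_contra hne
  have hmem : i ∈ Finset.univ.filter fun i => x i ≠ y i := by simp [hne]
  rw [dcard, Finset.card_eq_zero] at h
  simp [h] at hmem

lemma vd_of_le {n : ℕ} {x y : Fin n → Bool} (h : x ≤ y) :
    vd x y = (dcard x y : ℝ≥0∞) := by
  classical
  unfold vd dcard
  rw [if_pos h, Finset.card_filter]
  push_cast
  refine Finset.sum_congr rfl fun i _ => ?_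
  by_cases hi : x i = y i <;> simp [hi]

lemma vd_eq_one_iff {n : ℕ} {x y : Fin n → Bool} :
    vd x y = 1 ↔ x ≤ y ∧ dcard x y = 1 := by
  constructor
  · intro hv
    have hle : x ≤ y := by
      by_contra hn
      unfold vd at hv
      rw [if_neg hn] at hv
      exact ENNReal.top_ne_one hv
    refine ⟨hle, ?_⟩
    rw [vd_of_le hle] at hv
    exact_mod_cast hv
  · rintro ⟨hle, hd⟩
    rw [vd_of_le hle, hd]
    norm_num

lemma dcard_add {n : ℕ} {x y z : Fin n → Bool} (hxy : x ≤ y) (hyz : y ≤ z) :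
    dcard x z = dcard x y + dcard y z := by
  classical
  unfold dcard
  rw [← Finset.card_union_of_disjoint]
  · congr 1
    ext i
    have h1 := hxy i
    have h2 := hyz i
    simp only [Finset.mem_union, Finset.mem_filter, Finset.mem_univ, true_and]
    revert h1 h2
    cases x i <;> cases y i <;> cases z i <;> simp [Bool.le_iff_imp]
  · rw [Finset.disjoint_left]
    intro i hi hj
    have h1 := hxy i
    have h2 := hyz i
    simp only [Finset.mem_filter, Finset.mem_univ, true_and] at hi hj
    revert h1 h2 hi hj
    cases x i <;> cases y i <;> cases z i <;> simp [Bool.le_iff_imp]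

lemma mono_of_cotransverse {m n : ℕ} {f : (Fin m → Bool) → (Fin n → Bool)}
    (hf : Cotransverse f) : Monotone f := by
  intro x y h
  rcases eq_or_lt_of_le h with h | h
  · exact le_of_eq (congrArg f h)
  · exact le_of_lt (hf.1 h)

lemma dcard_map {m n : ℕ} {f : (Fin m → Bool) → (Fin n → Bool)} (hf : Cotransverse f) :
    ∀ (d : ℕ) (x y : Fin m → Bool), x ≤ y → dcard x y = d → dcard (f x) (f y) = d := by
  intro d
  induction d with
  | zero =>
    intro x y _ h
    rw [eq_of_dcard_eq_zero h]
    simp [dcard]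
  | succ d ih =>
    intro x y hxy hd
    have hpos : 0 < dcard x y := by omega
    rw [dcard, Finset.card_pos] at hpos
    obtain ⟨i, hi⟩ := hpos
    have hxiyi : x i ≠ y i := by simpa using (Finset.mem_filter.mp hi).2
    have hvals : x i = false ∧ y i = true := by
      have h1 := hxy i
      revert h1 hxiyi
      cases x i <;> cases y i <;> simp
    set z : Fin m → Bool := Function.update x i true with hz
    have hxz : x ≤ z := by
      intro j
      by_cases hj : j = i
      · subst hj; rw [hz, Function.update_self, hvals.1]; exact Bool.false_le _
      · rw [hz, Function.update_of_ne hj]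
    have hzy : z ≤ y := by
      intro j
      by_cases hj : j = i
      · subst hj; rw [hz, Function.update_self, hvals.2]
      · rw [hz, Function.update_of_ne hj]; exact hxy j
    have hdxz : dcard x z = 1 := by
      rw [dcard]
      have : (Finset.univ.filter fun j => x j ≠ z j) = {i} := by
        ext j
        simp only [Finset.mem_filter, Finset.mem_univ, true_and, Finset.mem_singleton]
        constructor
        · intro hne
          by_contra hji
          exact hne (by rw [hz, Function.update_of_ne hji])
        · intro hji
          subst hji
          rw [hz, Function.update_self, hvals.1]
          simp
      rw [this, Finset.card_singleton]
    have hvxz : vd x z = 1 := vd_eq_one_iff.mpr ⟨hxz, hdxz⟩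
    have hvfxz := vd_eq_one_iff.mp (hf.2 x z hvxz)
    have hdzy : dcard z y = d := by
      have := dcard_add hxz hzy
      omega
    have hfzy := ih z y hzy hdzy
    have := dcard_add hvfxz.1 (mono_of_cotransverse hf hzy)
    omega

end Aux13

namespace Aux13

def bbot (m : ℕ) : Fin m → Bool := fun _ => false
def btop (m : ℕ) : Fin m → Bool := fun _ => true

lemma bbot_le (m : ℕ) (x : Fin m → Bool) : bbot m ≤ x := fun _ => Bool.false_le _
lemma le_btop (m : ℕ) (x : Fin m → Bool) : x ≤ btop m := fun _ => Bool.le_true _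

lemma dcard_bot_top (m : ℕ) : dcard (bbot m) (btop m) = m := by
  simp [dcard, bbot, btop]

variable {m n : ℕ}

/-- The set of coordinates that `f` changes. -/
def diffS (f : (Fin m → Bool) → (Fin n → Bool)) : Finset (Fin n) :=
  Finset.univ.filter fun j => f (bbot m) j ≠ f (btop m) j

lemma diffS_card (f : (Fin m → Bool) → (Fin n → Bool)) (hf : Cotransverse f) :
    (diffS f).card = m :=
  dcard_map hf m _ _ (bbot_le m _) (dcard_bot_top m)

noncomputable def emb (f : (Fin m → Bool) → (Fin n → Bool)) (hf : Cotransverse f) :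
    Fin m ≃o (diffS f) :=
  (diffS f).orderIsoOfFin (diffS_card f hf)

noncomputable def iota (f : (Fin m → Bool) → (Fin n → Bool)) (hf : Cotransverse f) :
    Fin m → Fin n :=
  fun i => (emb f hf i : Fin n)

lemma iota_strictMono (f : (Fin m → Bool) → (Fin n → Bool)) (hf : Cotransverse f) :
    StrictMono (iota f hf) :=
  fun _ _ hab => Subtype.coe_lt_coe.mpr ((emb f hf).strictMono hab)

lemma iota_mem (f : (Fin m → Bool) → (Fin n → Bool)) (hf : Cotransverse f) (i : Fin m) :
    iota f hf i ∈ diffS f := (emb f hf i).2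

lemma mem_range_iota (f : (Fin m → Bool) → (Fin n → Bool)) (hf : Cotransverse f) (j : Fin n) :
    j ∈ diffS f ↔ j ∈ Set.range (iota f hf) := by
  constructor
  · intro hj
    exact ⟨(emb f hf).symm ⟨j, hj⟩, by simp [iota]⟩
  · rintro ⟨i, rfl⟩
    exact iota_mem f hf i

noncomputable def phi (f : (Fin m → Bool) → (Fin n → Bool)) (hf : Cotransverse f) :
    (Fin m → Bool) → (Fin n → Bool) :=
  fun x j => if hj : j ∈ diffS f then x ((emb f hf).symm ⟨j, hj⟩) else f (bbot m) j

lemma phi_iota (f : (Fin m → Bool) → (Fin n → Bool)) (hf : Cotransverse f)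
    (x : Fin m → Bool) (i : Fin m) : phi f hf x (iota f hf i) = x i := by
  have hj : iota f hf i ∈ diffS f := iota_mem f hf i
  rw [phi, dif_pos hj]
  congr 1
  have : (⟨iota f hf i, hj⟩ : diffS f) = emb f hf i := Subtype.ext rfl
  rw [this, OrderIso.symm_apply_apply]

lemma phi_cocubical (f : (Fin m → Bool) → (Fin n → Bool)) (hf : Cotransverse f) :
    Cocubical (phi f hf) := by
  refine ⟨iota f hf, f (bbot m), iota_strictMono f hf, phi_iota f hf, ?_⟩
  intro x j hj
  rw [phi, dif_neg]
  intro hjS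
  exact hj ((mem_range_iota f hf j).mp hjS)

/-- Pinning: any cotransverse `F` agreeing with `f` at bottom and top is constant
off `diffS f`. -/
lemma pin (f : (Fin m → Bool) → (Fin n → Bool))
    (F : (Fin m → Bool) → (Fin n → Bool)) (hF : Cotransverse F)
    (hb : F (bbot m) = f (bbot m)) (ht : F (btop m) = f (btop m))
    (x : Fin m → Bool) (j : Fin n) (hj : j ∉ diffS f) : F x j = f (bbot m) j := by
  have h1 : F (bbot m) j ≤ F x j := mono_of_cotransverse hF (bbot_le m x) j
  have h2 : F x j ≤ F (btop m) j := mono_of_cotransverse hF (le_btop m x) j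
  have heq : f (bbot m) j = f (btop m) j := by
    by_contra hne
    exact hj (by simp [diffS, hne])
  rw [hb] at h1
  rw [ht, heq.symm] at h2
  exact le_antisymm h2 h1 ▸ rfl

lemma dcard_K (f : (Fin m → Bool) → (Fin n → Bool)) (hf : Cotransverse f)
    (F : (Fin m → Bool) → (Fin n → Bool)) (hF : Cotransverse F)
    (hb : F (bbot m) = f (bbot m)) (ht : F (btop m) = f (btop m))
    (x y : Fin m → Bool) :
    dcard (fun i => F x (iota f hf i)) (fun i => F y (iota f hf i)) = dcard (F x) (F y) := by
  classical
  have himg : (Finset.univ.filter fun j => F x j ≠ F y j)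
      = (Finset.univ.filter fun i => F x (iota f hf i) ≠ F y (iota f hf i)).image (iota f hf) := by
    ext j
    simp only [Finset.mem_filter, Finset.mem_univ, true_and, Finset.mem_image]
    constructor
    · intro hne
      have hjS : j ∈ diffS f := by
        by_contra hj
        exact hne ((pin f F hF hb ht x j hj).trans (pin f F hF hb ht y j hj).symm)
      obtain ⟨i, rfl⟩ := (mem_range_iota f hf j).mp hjS
      exact ⟨i, ⟨hne, rfl⟩⟩
    · rintro ⟨i, hne, rfl⟩
      exact hne
  unfold dcard
  rw [himg, Finset.card_image_of_injective _ (iota_strictMono f hf).injective]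

lemma K_cotransverse (f : (Fin m → Bool) → (Fin n → Bool)) (hf : Cotransverse f)
    (F : (Fin m → Bool) → (Fin n → Bool)) (hF : Cotransverse F)
    (hb : F (bbot m) = f (bbot m)) (ht : F (btop m) = f (btop m)) :
    Cotransverse (fun x i => F x (iota f hf i)) := by
  constructor
  · intro x y hxy
    have hlt : F x < F y := hF.1 hxy
    have hle : (fun i => F x (iota f hf i)) ≤ fun i => F y (iota f hf i) :=
      fun i => hlt.le (iota f hf i)
    refine lt_of_le_of_ne hle ?_
    intro hKeq
    have hKeq' : (fun i => F x (iota f hf i)) = (fun i => F y (iota f hf i)) := hKeq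
    have h0 : dcard (fun i => F x (iota f hf i)) (fun i => F y (iota f hf i)) = 0 := by
      rw [hKeq']; simp [dcard]
    rw [dcard_K f hf F hF hb ht] at h0
    exact hlt.ne (eq_of_dcard_eq_zero h0)
  · intro x y hv
    obtain ⟨hle, hd⟩ := vd_eq_one_iff.mp (hF.2 x y hv)
    refine vd_eq_one_iff.mpr ⟨fun i => hle (iota f hf i), ?_⟩
    rw [dcard_K f hf F hF hb ht, hd]

lemma phi_comp_K (f : (Fin m → Bool) → (Fin n → Bool)) (hf : Cotransverse f)
    (F : (Fin m → Bool) → (Fin n → Bool)) (hF : Cotransverse F)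
    (hb : F (bbot m) = f (bbot m)) (ht : F (btop m) = f (btop m)) :
    phi f hf ∘ (fun x i => F x (iota f hf i)) = F := by
  funext x j
  by_cases hj : j ∈ diffS f
  · show phi f hf (fun i => F x (iota f hf i)) j = F x j
    rw [phi, dif_pos hj]
    show F x (iota f hf ((emb f hf).symm ⟨j, hj⟩)) = F x j
    congr 1
    show ((emb f hf ((emb f hf).symm ⟨j, hj⟩)) : Fin n) = j
    rw [OrderIso.apply_symm_apply]
  · show phi f hf (fun i => F x (iota f hf i)) j = F x j
    rw [phi, dif_neg hj, (pin f F hF hb ht x j hj)]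

lemma K_unique (f : (Fin m → Bool) → (Fin n → Bool)) (hf : Cotransverse f)
    (F : (Fin m → Bool) → (Fin n → Bool))
    (k' : (Fin m → Bool) → (Fin m → Bool)) (hk' : F = phi f hf ∘ k') :
    k' = fun x i => F x (iota f hf i) := by
  funext x i
  have h1 : F x (iota f hf i) = phi f hf (k' x) (iota f hf i) := by
    rw [hk']; rfl
  rw [h1, phi_iota]

lemma endo_bot_top {g : (Fin m → Bool) → (Fin m → Bool)} (hg : Cotransverse g) :
    g (bbot m) = bbot m ∧ g (btop m) = btop m := by
  have hd : dcard (g (bbot m)) (g (btop m)) = m :=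
    dcard_map hg m _ _ (bbot_le m _) (dcard_bot_top m)
  have hle : g (bbot m) ≤ g (btop m) := mono_of_cotransverse hg (bbot_le m _)
  have huniv : (Finset.univ.filter fun i => g (bbot m) i ≠ g (btop m) i) = Finset.univ := by
    apply Finset.eq_univ_of_card
    rw [Fintype.card_fin]
    exact hd
  have hall : ∀ i, g (bbot m) i ≠ g (btop m) i := by
    intro i
    have : i ∈ (Finset.univ.filter fun i => g (bbot m) i ≠ g (btop m) i) := by
      rw [huniv]; exact Finset.mem_univ i
    simpa using this
  constructor
  · funext i
    have h1 := hle i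
    have h2 := hall i
    revert h1 h2
    rw [show bbot m i = false from rfl]
    cases g (bbot m) i <;> cases g (btop m) i <;> simp [Bool.le_iff_imp]
  · funext i
    have h1 := hle i
    have h2 := hall i
    revert h1 h2
    rw [show btop m i = true from rfl]
    cases g (bbot m) i <;> cases g (btop m) i <;> simp [Bool.le_iff_imp]

end Aux13


/-- Every cotransverse map `f : [m] → [n]` (with `m ≤ n`) factors as a
cocubical map `φ` following a level cotransverse map `ψ`, and this
factorization is final among all factorizations of `f` with level second
component. -/
theorem stmt13 (m n : ℕ) (hmn : m ≤ n) (f : (Fin m → Bool) → (Fin n → Bool))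
    (hf : Cotransverse f) :
    ∃ (φ : (Fin m → Bool) → (Fin n → Bool)) (ψ : (Fin m → Bool) → (Fin m → Bool)),
      Cocubical φ ∧ Cotransverse ψ ∧ f = φ ∘ ψ ∧
      ∀ (h : (Fin m → Bool) → (Fin n → Bool)) (g : (Fin m → Bool) → (Fin m → Bool)),
        Cotransverse h → Cotransverse g → f = h ∘ g →
        ∃! k : (Fin m → Bool) → (Fin m → Bool),
          Cotransverse k ∧ ψ = k ∘ g ∧ h = φ ∘ k := by
  classical
  refine ⟨Aux13.phi f hf, fun x i => f x (Aux13.iota f hf i),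
    Aux13.phi_cocubical f hf,
    Aux13.K_cotransverse f hf f hf rfl rfl,
    (Aux13.phi_comp_K f hf f hf rfl rfl).symm, ?_⟩
  intro h g hh hg hfac
  obtain ⟨hgb, hgt⟩ := Aux13.endo_bot_top hg
  have hb : h (Aux13.bbot m) = f (Aux13.bbot m) := by
    rw [hfac]
    show h (Aux13.bbot m) = h (g (Aux13.bbot m))
    rw [hgb]
  have ht : h (Aux13.btop m) = f (Aux13.btop m) := by
    rw [hfac]
    show h (Aux13.btop m) = h (g (Aux13.btop m))
    rw [hgt]
  refine ⟨fun x i => h x (Aux13.iota f hf i),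
    ⟨Aux13.K_cotransverse f hf h hh hb ht, ?_, (Aux13.phi_comp_K f hf h hh hb ht).symm⟩, ?_⟩
  · funext x i
    exact congrFun (congrFun hfac x) (Aux13.iota f hf i)
  · rintro k' ⟨-, -, hk'⟩
    exact Aux13.K_unique f hf h k' hk'
end

section
/- Fix natural numbers p, q, n with p ≤ q and p < n. On the set of triples (m, h, g) where m < n, h : [m] → [q] is cotransverse and g : [p] → [m] is cotransverse, consider the equivalence relation generated by identifying (m', h ∘ k, g) with (m, h, k ∘ g) for every cotransverse k : [m'] → [m] with m, m' < n, every cotransverse h : [m] → [q] and every cotransverse g : [p] → [m']. Then two triples are equivalent if and only if they have equal composites, and the map (m, h, g) ↦ h ∘ g induces a bijection from the quotient set onto the set of cotransverse maps [p] → [q]. -/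
open scoped ENNReal

/-- A triple `(m, h, g)` with `m < n`, `h : [m] → [q]` cotransverse and
`g : [p] → [m]` cotransverse. -/
structure Triple (p q n : ℕ) where
  m : ℕ
  hmn : m < n
  h : (Fin m → Bool) → (Fin q → Bool)
  g : (Fin p → Bool) → (Fin m → Bool)
  hh : Cotransverse h
  hg : Cotransverse g

/-- The generating relation: `(m', h ∘ k, g)` is related to `(m, h, k ∘ g)`
for every cotransverse `k : [m'] → [m]`. -/
def TripleRel {p q n : ℕ} (t t' : Triple p q n) : Prop :=
  ∃ k : (Fin t.m → Bool) → (Fin t'.m → Bool),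
    Cotransverse k ∧ t.h = t'.h ∘ k ∧ t'.g = k ∘ t.g


lemma cotransverse_id {m : ℕ} : Cotransverse (id : (Fin m → Bool) → (Fin m → Bool)) :=
  ⟨strictMono_id, fun _ _ h => h⟩

lemma cotransverse_comp {a b c : ℕ} {f : (Fin b → Bool) → (Fin c → Bool)}
    {g : (Fin a → Bool) → (Fin b → Bool)} (hf : Cotransverse f) (hg : Cotransverse g) :
    Cotransverse (f ∘ g) :=
  ⟨hf.1.comp hg.1, fun x y h => hf.2 _ _ (hg.2 x y h)⟩

def canonT (p q n : ℕ) (hpn : p < n) (f : (Fin p → Bool) → (Fin q → Bool))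
    (hf : Cotransverse f) : Triple p q n :=
  ⟨p, hpn, f, id, hf, cotransverse_id⟩

lemma canonT_rel {p q n : ℕ} (hpn : p < n) (t : Triple p q n) :
    TripleRel (canonT p q n hpn (t.h ∘ t.g) (cotransverse_comp t.hh t.hg)) t :=
  ⟨t.g, t.hg, rfl, rfl⟩

lemma canonT_congr {p q n : ℕ} (hpn : p < n) {f f' : (Fin p → Bool) → (Fin q → Bool)}
    (h : f = f') (hf : Cotransverse f) (hf' : Cotransverse f') :
    canonT p q n hpn f hf = canonT p q n hpn f' hf' := by subst h; rfl

lemma tripleRel_comp {p q n : ℕ} {t t' : Triple p q n} (h : TripleRel t t') :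
    t.h ∘ t.g = t'.h ∘ t'.g := by
  obtain ⟨k, hk, h1, h2⟩ := h
  rw [h1, h2]; rfl

def liftMap (p q n : ℕ) :
    Quot (TripleRel (p := p) (q := q) (n := n)) →
      {f : (Fin p → Bool) → (Fin q → Bool) // Cotransverse f} :=
  Quot.lift (fun t => ⟨t.h ∘ t.g, cotransverse_comp t.hh t.hg⟩)
    (fun _ _ h => Subtype.ext (tripleRel_comp h))

/-- Two triples are equivalent (for the equivalence relation generated by
`TripleRel`) if and only if their composites agree, and `(m, h, g) ↦ h ∘ g`
induces a bijection from the quotient onto the set of cotransverse maps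
`[p] → [q]`. -/
theorem stmt15 (p q n : ℕ) (hpq : p ≤ q) (hpn : p < n) :
    (∀ t t' : Triple p q n,
      Relation.EqvGen (TripleRel (p := p) (q := q) (n := n)) t t' ↔
        t.h ∘ t.g = t'.h ∘ t'.g) ∧
    ∃ e : Quot (TripleRel (p := p) (q := q) (n := n)) ≃
        {f : (Fin p → Bool) → (Fin q → Bool) // Cotransverse f},
      ∀ t : Triple p q n, (e (Quot.mk _ t)).1 = t.h ∘ t.g := by
  have inv : ∀ t t' : Triple p q n,
      Relation.EqvGen (TripleRel (p := p) (q := q) (n := n)) t t' →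
        t.h ∘ t.g = t'.h ∘ t'.g := by
    intro t t' h
    induction h with
    | rel _ _ h => exact tripleRel_comp h
    | refl => rfl
    | symm _ _ _ ih => exact ih.symm
    | trans _ _ _ _ _ ih1 ih2 => exact ih1.trans ih2
  constructor
  · intro t t'
    refine ⟨inv t t', fun hcomp => ?_⟩
    have h1 := Relation.EqvGen.rel _ _ (canonT_rel hpn t)
    have h2 := Relation.EqvGen.rel _ _ (canonT_rel hpn t')
    rw [canonT_congr hpn hcomp _ (cotransverse_comp t'.hh t'.hg)] at h1
    exact Relation.EqvGen.trans _ _ _ (Relation.EqvGen.symm _ _ h1) h2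
  · have li : ∀ x, Quot.mk _ (canonT p q n hpn (liftMap p q n x).1 (liftMap p q n x).2) = x := by
      intro x
      induction x using Quot.ind with
      | _ t => exact Quot.sound (canonT_rel hpn t)
    exact ⟨⟨liftMap p q n,
      fun f => Quot.mk _ (canonT p q n hpn f.1 f.2), li, fun f => rfl⟩, fun t => rfl⟩
end
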